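/- Let ρ be a Borel probability measure on ℝ and E_ρ the associated position observable on L²(ℝ), (E_ρ(X)f)(x) = ρ(X − x)f(x). Suppose ‖E_ρ(O)‖ = 1 for every nonempty open set O ⊆ ℝ. Then the support of ρ consists of a single point, i.e. ρ = δ_t for some t ∈ ℝ, and consequently E_ρ(X) = Π_Q(X − t) is a projection for every Borel X. -/
import Mathlib


open MeasureTheory Complex

noncomputable section

/-- `L²(ℝ)` with Lebesgue measure. -/
abbrev L2 : Type := Lp ℂ 2 (volume : Measure ℝ)

/-- `T` is the operator of multiplication by the bounded function `x ↦ ρ(X − x)`. -/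
def IsMulByMeas (ρ : Measure ℝ) (X : Set ℝ) (T : L2 →L[ℂ] L2) : Prop :=
  ∀ f : L2, (T f : ℝ → ℂ) =ᵐ[volume]
    fun x => ((ρ ((· + x) ⁻¹' X)).toReal : ℂ) * (f : ℝ → ℂ) x

/-- norm bound for a multiplication operator with multiplier bounded by C. -/
lemma mul_opNorm_le (g : ℝ → ℝ) (C : ℝ) (hC : 0 ≤ C) (hg : ∀ x, |g x| ≤ C)
    (T : L2 →L[ℂ] L2)
    (hT : ∀ f : L2, (T f : ℝ → ℂ) =ᵐ[volume] fun x => (g x : ℂ) * (f : ℝ → ℂ) x) :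
    ‖T‖ ≤ C := by
  refine ContinuousLinearMap.opNorm_le_bound _ hC (fun f => ?_)
  rw [Lp.norm_def, Lp.norm_def, eLpNorm_congr_ae (hT f)]
  have h1 : eLpNorm (fun x => (g x : ℂ) * (f : ℝ → ℂ) x) 2 volume
      ≤ eLpNorm ((C : ℂ) • ((f : ℝ → ℂ))) 2 volume := by
    refine eLpNorm_mono_ae (Filter.Eventually.of_forall fun x => ?_)
    have : ((C : ℂ) • ((f : ℝ → ℂ))) x = (C : ℂ) * (f : ℝ → ℂ) x := rfl
    rw [this, norm_mul, norm_mul]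
    gcongr
    rw [Complex.norm_real, Complex.norm_real]
    simpa [_root_.abs_of_nonneg hC] using hg x
  have h2 : eLpNorm ((C : ℂ) • ((f : ℝ → ℂ))) 2 volume
      = (‖(C : ℂ)‖₊ : ENNReal) * eLpNorm (f : ℝ → ℂ) 2 volume :=
    eLpNorm_const_smul _ _ _ _
  calc (eLpNorm (fun x => (g x : ℂ) * (f : ℝ → ℂ) x) 2 volume).toReal
      ≤ ((‖(C : ℂ)‖₊ : ENNReal) * eLpNorm (f : ℝ → ℂ) 2 volume).toReal := by
        refine ENNReal.toReal_mono ?_ (h1.trans_eq h2)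
        exact ENNReal.mul_ne_top (by simp) (Lp.eLpNorm_ne_top f)
    _ = C * (eLpNorm (f : ℝ → ℂ) 2 volume).toReal := by
        rw [ENNReal.toReal_mul]
        congr 1
        simp [_root_.abs_of_nonneg hC, hC]

lemma ball_preimage' (x r : ℝ) : (· + x) ⁻¹' Metric.ball (0:ℝ) r = Metric.ball (-x) r := by
  ext y
  simp [Metric.mem_ball, Real.dist_eq, sub_neg_eq_add]

lemma exists_ball_big (ρ : Measure ℝ) [IsProbabilityMeasure ρ]
    (E : Set ℝ → (L2 →L[ℂ] L2))
    (hE : ∀ X : Set ℝ, MeasurableSet X → IsMulByMeas ρ X (E X))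
    (hnorm : ∀ O : Set ℝ, IsOpen O → O.Nonempty → ‖E O‖ = 1)
    {ε r : ℝ} (hε : 0 < ε) (hε1 : ε < 1) (hr : 0 < r) :
    ∃ c : ℝ, 1 - ε < (ρ (Metric.ball c r)).toReal := by
  by_contra h
  push_neg at h
  set O := Metric.ball (0:ℝ) r with hO
  have key : ∀ x, |(ρ ((· + x) ⁻¹' O)).toReal| ≤ 1 - ε := by
    intro x
    rw [_root_.abs_of_nonneg ENNReal.toReal_nonneg, hO, ball_preimage' x r]
    exact h (-x)
  have hb := mul_opNorm_le _ (1 - ε) (by linarith) key (E O) (hE O measurableSet_ball)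
  rw [hnorm O Metric.isOpen_ball ⟨0, Metric.mem_ball_self hr⟩] at hb
  linarith

lemma dist_lt_of_measure (ρ : Measure ℝ) [IsProbabilityMeasure ρ] {a b r r' : ℝ}
    (h : 1 < (ρ (Metric.ball a r)).toReal + (ρ (Metric.ball b r')).toReal) :
    |a - b| < r + r' := by
  have hnd : ¬ Disjoint (Metric.ball a r) (Metric.ball b r') := by
    intro hd
    have hu : ρ (Metric.ball a r ∪ Metric.ball b r')
        = ρ (Metric.ball a r) + ρ (Metric.ball b r') :=
      measure_union hd measurableSet_ball
    have hle : ρ (Metric.ball a r) + ρ (Metric.ball b r') ≤ 1 := by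
      rw [← hu]; exact prob_le_one
    have := ENNReal.toReal_mono ENNReal.one_ne_top hle
    rw [ENNReal.toReal_add (measure_ne_top ρ _) (measure_ne_top ρ _)] at this
    simp at this
    linarith
  obtain ⟨y, hy1, hy2⟩ := Set.not_disjoint_iff.mp hnd
  have h1 : dist y a < r := Metric.mem_ball.mp hy1
  have h2 : dist y b < r' := Metric.mem_ball.mp hy2
  calc |a - b| = dist a b := (Real.dist_eq a b).symm
    _ ≤ dist a y + dist y b := dist_triangle _ _ _
    _ < r + r' := by rw [dist_comm a y]; linarith

lemma eq_dirac_of_compl (ρ : Measure ℝ) [IsProbabilityMeasure ρ] {t : ℝ}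
    (h : ρ {t}ᶜ = 0) : ρ = Measure.dirac t := by
  ext s hs
  rw [Measure.dirac_apply' t hs]
  by_cases hts : t ∈ s
  · rw [Set.indicator_of_mem hts]
    have hsc : ρ sᶜ = 0 :=
      measure_mono_null (Set.compl_subset_compl.mpr (Set.singleton_subset_iff.mpr hts)) h
    have hadd : ρ s + ρ sᶜ = ρ Set.univ := measure_add_measure_compl hs
    rw [hsc, add_zero, measure_univ] at hadd
    simpa using hadd
  · rw [Set.indicator_of_notMem hts]
    refine measure_mono_null (fun x hx => ?_) h
    simp only [Set.mem_compl_iff, Set.mem_singleton_iff]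
    rintro rfl
    exact hts hx


/-- if `‖E_ρ(O)‖ = 1` for every nonempty open `O`, then `ρ = δ_t` for some `t`,
and consequently every `E_ρ(X) = Π_Q(X − t)` is a projection (multiplication by `χ_{X−t}`). -/
theorem stmt4 (ρ : Measure ℝ) [IsProbabilityMeasure ρ]
    (E : Set ℝ → (L2 →L[ℂ] L2))
    (hE : ∀ X : Set ℝ, MeasurableSet X → IsMulByMeas ρ X (E X))
    (hnorm : ∀ O : Set ℝ, IsOpen O → O.Nonempty → ‖E O‖ = 1) :
    ∃ t : ℝ, ρ = Measure.dirac t ∧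
      (∀ X : Set ℝ, MeasurableSet X → (E X) ∘L (E X) = E X) ∧
      (∀ X : Set ℝ, MeasurableSet X → ∀ f : L2,
        (E X f : ℝ → ℂ) =ᵐ[volume]
          fun x => ({y : ℝ | y + t ∈ X}.indicator (fun _ => (1 : ℂ)) x) * (f : ℝ → ℂ) x) := by
  classical
  -- a sequence of small balls with large measure
  have hex : ∀ n : ℕ, ∃ c : ℝ, 1 - 1/3 < (ρ (Metric.ball c (1/(n+1)))).toReal := by
    intro n
    exact exists_ball_big ρ E hE hnorm (by norm_num) (by norm_num) (by positivity)
  choose c hc using hex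
  have hdist : ∀ m n : ℕ, |c m - c n| < 1/(m+1) + 1/(n+1) := by
    intro m n
    refine dist_lt_of_measure ρ ?_
    have h1 := hc m
    have h2 := hc n
    linarith
  have hcauchy : CauchySeq c := by
    rw [Metric.cauchySeq_iff]
    intro ε hε
    obtain ⟨N, hN⟩ := exists_nat_one_div_lt (show (0:ℝ) < ε/2 by linarith)
    refine ⟨N, fun m hm n hn => ?_⟩
    have key : ∀ k : ℕ, N ≤ k → (1:ℝ)/(k+1) < ε/2 := by
      intro k hk
      refine lt_of_le_of_lt ?_ hN
      apply one_div_le_one_div_of_le (by positivity)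
      have : (N:ℝ) ≤ k := Nat.cast_le.mpr hk
      linarith
    have := hdist m n
    rw [Real.dist_eq]
    have km := key m hm
    have kn := key n hn
    linarith
  obtain ⟨t, ht⟩ := cauchySeq_tendsto_of_complete hcauchy
  -- every closed ball around t has full measure
  have hcb : ∀ δ : ℝ, 0 < δ → ρ (Metric.closedBall t δ) = 1 := by
    intro δ hδ
    have htoReal : ∀ ε : ℝ, 0 < ε → 1 - ε ≤ (ρ (Metric.closedBall t δ)).toReal := by
      intro ε hε
      set ε' := min ε (1/4) with hε'def
      have hε'pos : 0 < ε' := lt_min hε (by norm_num)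
      have hε'le : ε' ≤ 1/4 := min_le_right _ _
      have hε'le' : ε' ≤ ε := min_le_left _ _
      obtain ⟨c₀, hc₀⟩ := exists_ball_big ρ E hE hnorm hε'pos
        (lt_of_le_of_lt hε'le (by norm_num)) (half_pos hδ)
      have hd : ∀ n : ℕ, |c₀ - c n| < δ/2 + 1/(n+1) := by
        intro n
        refine dist_lt_of_measure ρ ?_
        have := hc n
        linarith
      have hlim : |c₀ - t| ≤ δ/2 := by
        have h1 : Filter.Tendsto (fun n : ℕ => |c₀ - c n|) Filter.atTop (nhds |c₀ - t|) :=
          ((tendsto_const_nhds.sub ht).abs)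
        have h2 : Filter.Tendsto (fun n : ℕ => δ/2 + 1/(n+1)) Filter.atTop (nhds (δ/2 + 0)) :=
          tendsto_const_nhds.add tendsto_one_div_add_atTop_nhds_zero_nat
        have := le_of_tendsto_of_tendsto' h1 h2 (fun n => (hd n).le)
        simpa using this
      have hsub : Metric.ball c₀ (δ/2) ⊆ Metric.closedBall t δ := by
        intro y hy
        rw [Metric.mem_ball, Real.dist_eq] at hy
        rw [Metric.mem_closedBall, Real.dist_eq]
        have h1 : |y - t| ≤ |y - c₀| + |c₀ - t| := by
          calc |y - t| = |(y - c₀) + (c₀ - t)| := by ring_nf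
            _ ≤ |y - c₀| + |c₀ - t| := abs_add_le _ _
        linarith
      have hm := ENNReal.toReal_mono (measure_ne_top ρ _) (measure_mono hsub)
      linarith
    have h1le : (ρ (Metric.closedBall t δ)).toReal = 1 := by
      have hle : (ρ (Metric.closedBall t δ)).toReal ≤ 1 := by
        have := ENNReal.toReal_mono ENNReal.one_ne_top (prob_le_one (μ := ρ)
          (s := Metric.closedBall t δ))
        simpa using this
      refine le_antisymm hle ?_
      by_contra hlt
      push_neg at hlt
      have := htoReal ((1 - (ρ (Metric.closedBall t δ)).toReal)/2) (by linarith)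
      linarith
    rw [← ENNReal.ofReal_toReal (measure_ne_top ρ _), h1le, ENNReal.ofReal_one]
  -- ρ = dirac t
  have hcompl : ρ {t}ᶜ = 0 := by
    have hsub : ({t}ᶜ : Set ℝ) ⊆ ⋃ n : ℕ, (Metric.closedBall t (1/(n+1)))ᶜ := by
      intro x hx
      have hxt : x ≠ t := hx
      have hpos : 0 < |x - t| := abs_pos.mpr (sub_ne_zero.mpr hxt)
      obtain ⟨n, hn⟩ := exists_nat_one_div_lt hpos
      refine Set.mem_iUnion.mpr ⟨n, ?_⟩
      simp only [Set.mem_compl_iff, Metric.mem_closedBall, Real.dist_eq, not_le]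
      exact_mod_cast hn
    refine measure_mono_null hsub (measure_iUnion_null fun n => ?_)
    rw [measure_compl measurableSet_closedBall (measure_ne_top ρ _),
      hcb (1/(n+1)) (by positivity), measure_univ, tsub_self]
  have hρ : ρ = Measure.dirac t := eq_dirac_of_compl ρ hcompl
  -- the multiplier is an indicator
  have hcoef : ∀ X : Set ℝ, MeasurableSet X → ∀ x : ℝ,
      (((ρ ((· + x) ⁻¹' X)).toReal : ℝ) : ℂ)
        = {y : ℝ | y + t ∈ X}.indicator (fun _ => (1:ℂ)) x := by
    intro X hX x
    rw [hρ, Measure.dirac_apply' t (hX.preimage (measurable_add_const x))]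
    by_cases hmem : x + t ∈ X
    · have ht' : t ∈ (· + x) ⁻¹' X := by
        simpa [Set.mem_preimage, add_comm] using hmem
      rw [Set.indicator_of_mem ht', Set.indicator_of_mem (show x ∈ {y : ℝ | y + t ∈ X} from hmem)]
      simp
    · have ht' : t ∉ (· + x) ⁻¹' X := by
        simpa [Set.mem_preimage, add_comm] using hmem
      rw [Set.indicator_of_notMem ht',
        Set.indicator_of_notMem (show x ∉ {y : ℝ | y + t ∈ X} from hmem)]
      simp
  have hidem : ∀ X : Set ℝ, MeasurableSet X → ∀ x : ℝ,
      (((ρ ((· + x) ⁻¹' X)).toReal : ℝ) : ℂ) * (((ρ ((· + x) ⁻¹' X)).toReal : ℝ) : ℂ)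
        = (((ρ ((· + x) ⁻¹' X)).toReal : ℝ) : ℂ) := by
    intro X hX x
    rw [hcoef X hX x]
    by_cases hmem : x ∈ {y : ℝ | y + t ∈ X}
    · rw [Set.indicator_of_mem hmem]; simp
    · rw [Set.indicator_of_notMem hmem]; simp
  refine ⟨t, hρ, ?_, ?_⟩
  · intro X hX
    refine ContinuousLinearMap.ext fun f => ?_
    refine Lp.ext ?_
    have h1 := hE X hX f
    have h2 := hE X hX (E X f)
    show ((E X) ((E X) f) : ℝ → ℂ) =ᵐ[volume] ((E X) f : ℝ → ℂ)
    calc ((E X) ((E X) f) : ℝ → ℂ)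
        =ᵐ[volume] fun x => (((ρ ((· + x) ⁻¹' X)).toReal : ℝ) : ℂ) * ((E X) f : ℝ → ℂ) x := h2
      _ =ᵐ[volume] fun x => (((ρ ((· + x) ⁻¹' X)).toReal : ℝ) : ℂ)
          * ((((ρ ((· + x) ⁻¹' X)).toReal : ℝ) : ℂ) * (f : ℝ → ℂ) x) := by
            filter_upwards [h1] with x hx
            rw [hx]
      _ =ᵐ[volume] fun x => (((ρ ((· + x) ⁻¹' X)).toReal : ℝ) : ℂ) * (f : ℝ → ℂ) x := by
            refine Filter.Eventually.of_forall fun x => ?_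
            dsimp only
            rw [← mul_assoc, hidem X hX x]
      _ =ᵐ[volume] ((E X) f : ℝ → ℂ) := (h1).symm
  · intro X hX f
    refine (hE X hX f).trans (Filter.Eventually.of_forall fun x => ?_)
    dsimp only
    rw [hcoef X hX x]
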